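/- arXiv:1011.2615 — 3 statements merged into one kernel-verified Lean document; each statement's English description precedes it below -/
import Mathlib

section
/- Let T > 0 and let φ : (-∞,T] → E be strongly measurable, continuous on [0,T], and such that (φ_0, φ(0)) ∈ ℬ. Then for every t ∈ [0,T] one has ‖φ(t)‖ ≤ ‖(φ_t, φ(t))‖_ℬ ≤ K(t)·sup_{s∈[0,t]}‖φ(s)‖ + M(t)·‖(φ_0, φ(0))‖_ℬ, where K(t) := 1 + (∫_{-t}^0 g(u) du)^{1/p} and M(t) := max{(∫_{-t}^0 g(u) du)^{1/p}, G(-t)^{1/p}}. -/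
open MeasureTheory Set

/-!
Split the history integral `∫_{θ ≤ 0} g(θ) ‖φ(t+θ)‖^p` at `θ = -t`. On `(-t, 0]` the integrand is
at most `g(θ) · (sup_{[0,t]} ‖φ‖)^p`. On `(-∞, -t]` the substitution `θ ↦ θ - t` and
`g(-t+θ) ≤ G(-t) g(θ)` bound it by `G(-t)` times the initial history integral. Taking `p`-th roots,
`(a + b)^{1/p} ≤ a^{1/p} + b^{1/p}` gives the estimate. The pieces are compared as lower Lebesgue
integrals, so no integrability of the shifted integrand is needed: if it fails, the Bochner integral
is `0`.
-/

lemma le_biSup_of_bddAbove_image {α : Type*} {f : α → ℝ} {s : Set α} (hf : BddAbove (f '' s))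
    {x : α} (hx : x ∈ s) : f x ≤ ⨆ y ∈ s, f y :=
  le_ciSup₂ (f := fun y (_ : y ∈ s) => f y)
    (hf.mono (iUnion_subset fun _ => range_subset_iff.2 fun hy => mem_image_of_mem f hy)) x hx

lemma integral_le_of_lintegral_ofReal_le {α : Type*} [MeasurableSpace α] {μ : Measure α}
    {f : α → ℝ} (hf : 0 ≤ᵐ[μ] f) {B : ℝ} (hB : 0 ≤ B)
    (h : ∫⁻ a, ENNReal.ofReal (f a) ∂μ ≤ ENNReal.ofReal B) : ∫ a, f a ∂μ ≤ B := by
  by_cases hfi : Integrable f μ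
  · rwa [← ENNReal.ofReal_le_ofReal_iff hB, ofReal_integral_eq_lintegral_ofReal hfi hf]
  · rwa [integral_undef hfi]

lemma setLIntegral_ofReal_mul_le {α : Type*} [MeasurableSpace α] {μ : Measure α} {s : Set α}
    (hs : MeasurableSet s) {g u : α → ℝ} {M : ℝ} (hM : 0 ≤ M) (hg : IntegrableOn g s μ)
    (hg0 : ∀ x ∈ s, 0 ≤ g x) (hu : ∀ x ∈ s, u x ≤ M) :
    ∫⁻ x in s, ENNReal.ofReal (g x * u x) ∂μ ≤ ENNReal.ofReal (M * ∫ x in s, g x ∂μ) := by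
  rw [← integral_const_mul, ofReal_integral_eq_lintegral_ofReal (hg.const_mul M)
    ((ae_restrict_iff' hs).2 (ae_of_all _ fun x hx => mul_nonneg hM (hg0 x hx)))]
  refine setLIntegral_mono' hs fun x hx => ENNReal.ofReal_le_ofReal ?_
  rw [mul_comm M]
  exact mul_le_mul_of_nonneg_left (hu x hx) (hg0 x hx)

lemma setLIntegral_Iic_shift_le {g ψ : ℝ → ℝ} (hg0 : ∀ θ ≤ 0, 0 ≤ g θ) (hψ0 : ∀ θ, 0 ≤ ψ θ)
    (hgψ : IntegrableOn (fun θ => g θ * ψ θ) (Iic 0)) {t c : ℝ} (hc : 0 ≤ c)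
    (hGg : ∀ᵐ θ ∂(volume.restrict (Iic (0:ℝ))), g (-t + θ) ≤ c * g θ) :
    ∫⁻ θ in Iic (-t), ENNReal.ofReal (g θ * ψ (t + θ)) ≤
      ENNReal.ofReal (c * ∫ θ in Iic 0, g θ * ψ θ) := by
  have hshift := (measurePreserving_add_right volume (-t)).setLIntegral_comp_preimage_emb
    (measurableEmbedding_addRight (-t)) (fun θ => ENNReal.ofReal (g θ * ψ (t + θ))) (Iic (-t))
  rw [← hshift, preimage_add_const_Iic, sub_self, ← integral_const_mul,
    ofReal_integral_eq_lintegral_ofReal (hgψ.const_mul c) ((ae_restrict_iff' measurableSet_Iic).2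
      (ae_of_all _ fun θ hθ => mul_nonneg hc (mul_nonneg (hg0 θ hθ) (hψ0 θ))))]
  refine lintegral_mono_ae (hGg.mono fun θ hθ => ENNReal.ofReal_le_ofReal ?_)
  rw [show t + (θ + -t) = θ by ring, add_comm θ, ← mul_assoc]
  exact mul_le_mul_of_nonneg_right hθ (hψ0 θ)

lemma rpow_mul_add_mul_rpow_one_div_le {p a b c d : ℝ} (hp : 1 ≤ p) (ha : 0 ≤ a) (hb : 0 ≤ b)
    (hc : 0 ≤ c) (hd : 0 ≤ d) :
    (a ^ p * c + b * d) ^ (1 / p) ≤ a * c ^ (1 / p) + b ^ (1 / p) * d ^ (1 / p) := by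
  have hp0 : 0 < p := zero_lt_one.trans_le hp
  calc (a ^ p * c + b * d) ^ (1 / p) ≤ (a ^ p * c) ^ (1 / p) + (b * d) ^ (1 / p) :=
        Real.rpow_add_le_add_rpow (by positivity) (by positivity) (by positivity)
          ((div_le_one hp0).2 hp)
    _ = a * c ^ (1 / p) + b ^ (1 / p) * d ^ (1 / p) := by
        rw [Real.mul_rpow (by positivity) hc, ← Real.rpow_mul ha, mul_one_div_cancel hp0.ne',
          Real.rpow_one, Real.mul_rpow hb hd]

lemma integral_history_le {E : Type*} [NormedAddCommGroup E] {φ : ℝ → E} {p : ℝ} (hp : 0 ≤ p)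
    {g : ℝ → ℝ} (hg0 : ∀ θ ≤ 0, 0 ≤ g θ) {t S c : ℝ} (ht : 0 ≤ t)
    (hg : IntegrableOn g (Icc (-t) 0)) (hc : 0 ≤ c)
    (hGg : ∀ᵐ θ ∂(volume.restrict (Iic (0:ℝ))), g (-t + θ) ≤ c * g θ)
    (hS : ∀ s ∈ Icc 0 t, ‖φ s‖ ≤ S) (hφ : IntegrableOn (fun θ => g θ * ‖φ θ‖ ^ p) (Iic 0)) :
    ∫ θ in Iic 0, g θ * ‖φ (t + θ)‖ ^ p ≤
      S ^ p * (∫ u in Icc (-t) 0, g u) + c * ∫ θ in Iic 0, g θ * ‖φ θ‖ ^ p := by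
  have hS0 : 0 ≤ S := (norm_nonneg _).trans (hS 0 ⟨le_rfl, ht⟩)
  have hpow0 : ∀ x : E, 0 ≤ ‖x‖ ^ p := fun x => Real.rpow_nonneg (norm_nonneg x) p
  have hrecent := setLIntegral_ofReal_mul_le (u := fun θ => ‖φ (t + θ)‖ ^ p) measurableSet_Ioc
    (Real.rpow_nonneg hS0 p) (hg.mono_set Ioc_subset_Icc_self) (fun θ hθ => hg0 θ hθ.2)
    (fun θ hθ => Real.rpow_le_rpow (norm_nonneg _)
      (hS _ ⟨by linarith [hθ.1], by linarith [hθ.2]⟩) hp)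
  rw [← integral_Icc_eq_integral_Ioc] at hrecent
  have hpast := setLIntegral_Iic_shift_le (ψ := fun θ => ‖φ θ‖ ^ p) hg0 (fun θ => hpow0 _) hφ hc hGg
  have hrecent0 : 0 ≤ S ^ p * ∫ u in Icc (-t) 0, g u :=
    mul_nonneg (Real.rpow_nonneg hS0 p)
      (setIntegral_nonneg measurableSet_Icc fun θ hθ => hg0 θ hθ.2)
  have hpast0 : 0 ≤ c * ∫ θ in Iic 0, g θ * ‖φ θ‖ ^ p :=
    mul_nonneg hc (setIntegral_nonneg measurableSet_Iic fun θ hθ => mul_nonneg (hg0 θ hθ) (hpow0 _))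
  refine integral_le_of_lintegral_ofReal_le ((ae_restrict_iff' measurableSet_Iic).2
    (ae_of_all _ fun θ hθ => mul_nonneg (hg0 θ hθ) (hpow0 _))) (add_nonneg hrecent0 hpast0) ?_
  calc ∫⁻ θ in Iic 0, ENNReal.ofReal (g θ * ‖φ (t + θ)‖ ^ p)
      = (∫⁻ θ in Iic (-t), ENNReal.ofReal (g θ * ‖φ (t + θ)‖ ^ p)) +
          ∫⁻ θ in Ioc (-t) 0, ENNReal.ofReal (g θ * ‖φ (t + θ)‖ ^ p) := by
        rw [← lintegral_union measurableSet_Ioc (Iic_disjoint_Ioc le_rfl),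
          Iic_union_Ioc_eq_Iic (neg_nonpos.2 ht)]
    _ ≤ _ := add_le_add hpast hrecent
    _ = _ := by rw [← ENNReal.ofReal_add hpast0 hrecent0, add_comm]

theorem history_KM_inequality_general
    {E : Type*} [NormedAddCommGroup E]
    (p : ℝ) (hp : 1 ≤ p)
    (g G : ℝ → ℝ)
    (hg_pos : ∀ θ ≤ (0:ℝ), 0 < g θ)
    (hg_int : ∀ r : ℝ, 0 ≤ r → IntegrableOn g (Set.Icc (-r) 0))
    (hG_nonneg : ∀ s ≤ (0:ℝ), 0 ≤ G s)
    (hGg : ∀ s ≤ (0:ℝ),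
      ∀ᵐ θ ∂(volume.restrict (Set.Iic (0:ℝ))), g (s + θ) ≤ G s * g θ)
    (T : ℝ)
    (φ : ℝ → E)
    (hφ_cont : ContinuousOn φ (Set.Icc 0 T))
    (hφ_init : IntegrableOn (fun θ => g θ * ‖φ θ‖ ^ p) (Set.Iic (0:ℝ)))
    (t : ℝ) (ht : t ∈ Set.Icc 0 T) :
    ‖φ t‖ ≤ ‖φ t‖ + (∫ θ in Set.Iic (0:ℝ), g θ * ‖φ (t + θ)‖ ^ p) ^ (1/p) ∧
    ‖φ t‖ + (∫ θ in Set.Iic (0:ℝ), g θ * ‖φ (t + θ)‖ ^ p) ^ (1/p) ≤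
      (1 + (∫ u in Set.Icc (-t) (0:ℝ), g u) ^ (1/p)) *
        (⨆ s ∈ Set.Icc (0:ℝ) t, ‖φ s‖) +
      (max ((∫ u in Set.Icc (-t) (0:ℝ), g u) ^ (1/p)) ((G (-t)) ^ (1/p))) *
        (‖φ 0‖ + (∫ θ in Set.Iic (0:ℝ), g θ * ‖φ θ‖ ^ p) ^ (1/p)) := by
  obtain ⟨ht0, htT⟩ := ht
  have hg0 : ∀ θ ≤ 0, 0 ≤ g θ := fun θ hθ => (hg_pos θ hθ).le
  have hG0 : 0 ≤ G (-t) := hG_nonneg _ (neg_nonpos.2 ht0)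
  set S := ⨆ s ∈ Icc (0:ℝ) t, ‖φ s‖
  set C := ∫ u in Icc (-t) (0:ℝ), g u
  set J := ∫ θ in Iic (0:ℝ), g θ * ‖φ θ‖ ^ p
  have hS : ∀ s ∈ Icc 0 t, ‖φ s‖ ≤ S := fun s hs => le_biSup_of_bddAbove_image
    (isCompact_Icc.bddAbove_image ((hφ_cont.mono (Icc_subset_Icc_right htT)).norm)) hs
  have hS0 : 0 ≤ S := (norm_nonneg _).trans (hS 0 ⟨le_rfl, ht0⟩)
  have hC0 : 0 ≤ C := setIntegral_nonneg measurableSet_Icc fun θ hθ => hg0 θ hθ.2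
  have hJ0 : 0 ≤ J := setIntegral_nonneg measurableSet_Iic fun θ hθ =>
    mul_nonneg (hg0 θ hθ) (Real.rpow_nonneg (norm_nonneg _) p)
  have hhist := integral_history_le (zero_le_one.trans hp) hg0 ht0 (hg_int t ht0) hG0
    (hGg (-t) (neg_nonpos.2 ht0)) hS hφ_init
  have hhist0 : 0 ≤ ∫ θ in Iic (0:ℝ), g θ * ‖φ (t + θ)‖ ^ p := setIntegral_nonneg
    measurableSet_Iic fun θ hθ => mul_nonneg (hg0 θ hθ) (Real.rpow_nonneg (norm_nonneg _) p)
  refine ⟨le_add_of_nonneg_right (Real.rpow_nonneg hhist0 _), ?_⟩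
  have hJmax : G (-t) ^ (1 / p) * J ^ (1 / p) ≤
      max (C ^ (1 / p)) (G (-t) ^ (1 / p)) * (‖φ 0‖ + J ^ (1 / p)) :=
    mul_le_mul (le_max_right _ _) (le_add_of_nonneg_left (norm_nonneg _))
      (Real.rpow_nonneg hJ0 _) ((Real.rpow_nonneg hG0 _).trans (le_max_right _ _))
  calc ‖φ t‖ + (∫ θ in Iic (0:ℝ), g θ * ‖φ (t + θ)‖ ^ p) ^ (1 / p)
      ≤ S + (S * C ^ (1 / p) + G (-t) ^ (1 / p) * J ^ (1 / p)) :=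
        add_le_add (hS t ⟨ht0, le_rfl⟩) ((Real.rpow_le_rpow hhist0 hhist (by positivity)).trans
          (rpow_mul_add_mul_rpow_one_div_le hp hS0 hG0 hC0 hJ0))
    _ ≤ _ := by linarith [hJmax]

/-- the `K`–`M` estimate `\eqref{eqn:KM_ineq}` for the history space
`ℬ = L^p_g(-∞,0;E) × E` with `‖(φ,x)‖_ℬ = ‖x‖ + (∫_{-∞}^0 g(θ)‖φ(θ)‖^p dθ)^{1/p}`:
for `φ` strongly measurable, continuous on `[0,T]` with `(φ₀,φ(0)) ∈ ℬ`, and `t ∈ [0,T]`,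
`‖φ(t)‖ ≤ ‖(φ_t,φ(t))‖_ℬ ≤ K(t)·sup_{s∈[0,t]}‖φ(s)‖ + M(t)·‖(φ₀,φ(0))‖_ℬ`, where
`K(t) = 1 + (∫_{-t}^0 g)^{1/p}` and `M(t) = max{(∫_{-t}^0 g)^{1/p}, G(-t)^{1/p}}`. -/
theorem history_KM_inequality
    {E : Type*} [NormedAddCommGroup E] [NormedSpace ℝ E] [CompleteSpace E]
    (p : ℝ) (hp : 1 ≤ p)
    (g G : ℝ → ℝ)
    (hg_pos : ∀ θ ≤ (0:ℝ), 0 < g θ)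
    (hg_int : ∀ r : ℝ, 0 ≤ r → IntegrableOn g (Set.Icc (-r) 0))
    (hG_nonneg : ∀ s ≤ (0:ℝ), 0 ≤ G s)
    (hG_locbdd : ∀ r : ℝ, 0 ≤ r → ∃ C : ℝ, ∀ s ∈ Set.Icc (-r) 0, G s ≤ C)
    (hGg : ∀ s ≤ (0:ℝ),
      ∀ᵐ θ ∂(volume.restrict (Set.Iic (0:ℝ))), g (s + θ) ≤ G s * g θ)
    (T : ℝ) (hT : 0 < T)
    (φ : ℝ → E) (hφ_meas : StronglyMeasurable φ)
    (hφ_cont : ContinuousOn φ (Set.Icc 0 T))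
    (hφ_init : IntegrableOn (fun θ => g θ * ‖φ θ‖ ^ p) (Set.Iic (0:ℝ)))
    (t : ℝ) (ht : t ∈ Set.Icc 0 T) :
    ‖φ t‖ ≤ ‖φ t‖ + (∫ θ in Set.Iic (0:ℝ), g θ * ‖φ (t + θ)‖ ^ p) ^ (1/p) ∧
    ‖φ t‖ + (∫ θ in Set.Iic (0:ℝ), g θ * ‖φ (t + θ)‖ ^ p) ^ (1/p) ≤
      (1 + (∫ u in Set.Icc (-t) (0:ℝ), g u) ^ (1/p)) *
        (⨆ s ∈ Set.Icc (0:ℝ) t, ‖φ s‖) +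
      (max ((∫ u in Set.Icc (-t) (0:ℝ), g u) ^ (1/p)) ((G (-t)) ^ (1/p))) *
        (‖φ 0‖ + (∫ θ in Set.Iic (0:ℝ), g θ * ‖φ θ‖ ^ p) ^ (1/p)) :=
  history_KM_inequality_general p hp g G hg_pos hg_int hG_nonneg hGg T φ hφ_cont hφ_init t ht
end

section
/- Let T > 0 and let φ, ψ : (-∞,T] → E be strongly measurable functions that are continuous on [0,T], satisfy φ(θ) = ψ(θ) for all θ ≤ 0, and have (φ_0, φ(0)) ∈ ℬ and (ψ_0, ψ(0)) ∈ ℬ. Then for every t ∈ [0,T], ‖((φ-ψ)_t, (φ-ψ)(t))‖_ℬ ≤ K(t)·sup_{s∈[0,t]}‖φ(s) - ψ(s)‖, where K(t) := 1 + (∫_{-t}^0 g(u) du)^{1/p}; in particular ‖((φ-ψ)_t, (φ-ψ)(t))‖_ℬ ≤ (sup_{s∈[0,T]} K(s))·sup_{s∈[0,T]}‖φ(s) - ψ(s)‖. -/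
/-! Since `φ` and `ψ` agree on `(-∞, 0]`, the history `(φ - ψ)_t` vanishes below `-t`, so its
weighted `L^p` integral only runs over `[-t, 0]`, where `‖φ - ψ‖` is bounded by its supremum `M`
over `[0, t]`; hence that integral is at most `M^p ∫_{-t}^0 g`. The uniform bound follows because
`K` is monotone in `t` and the supremum over `[0, t]` is at most the one over `[0, T]`. -/

open MeasureTheory Set

theorem le_cbiSup {α β : Type*} [ConditionallyCompleteLattice α] {f : β → α} {s : Set β}
    (hb : BddAbove (f '' s)) {x : β} (hx : x ∈ s) : f x ≤ ⨆ y ∈ s, f y :=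
  le_ciSup₂ (f := fun y (_ : y ∈ s) => f y)
    (hb.mono <| iUnion_subset fun _ => range_subset_iff.2 fun hy => mem_image_of_mem f hy) x hx

theorem rpow_setIntegral_mul_rpow_le {α : Type*} [MeasurableSpace α] {μ : Measure α}
    {s : Set α} (hs : MeasurableSet s) {w h : α → ℝ} {p M : ℝ} (hp : 0 < p) (hM : 0 ≤ M)
    (hw : IntegrableOn w s μ) (hw_nonneg : ∀ x ∈ s, 0 ≤ w x) (h_nonneg : ∀ x ∈ s, 0 ≤ h x)
    (h_le : ∀ x ∈ s, h x ≤ M) :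
    (∫ x in s, w x * h x ^ p ∂μ) ^ (1 / p) ≤ M * (∫ x in s, w x ∂μ) ^ (1 / p) := by
  have hI : 0 ≤ ∫ x in s, w x ∂μ := setIntegral_nonneg hs hw_nonneg
  have hbound : ∫ x in s, w x * h x ^ p ∂μ ≤ M ^ p * ∫ x in s, w x ∂μ := by
    rw [← integral_const_mul]
    refine integral_mono_of_nonneg ?_ (hw.const_mul _) ?_ <;>
      filter_upwards [ae_restrict_mem hs] with x hx
    · exact mul_nonneg (hw_nonneg x hx) (Real.rpow_nonneg (h_nonneg x hx) p)
    · rw [mul_comm (M ^ p)]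
      exact mul_le_mul_of_nonneg_left
        (Real.rpow_le_rpow (h_nonneg x hx) (h_le x hx) hp.le) (hw_nonneg x hx)
  calc (∫ x in s, w x * h x ^ p ∂μ) ^ (1 / p)
      ≤ (M ^ p * ∫ x in s, w x ∂μ) ^ (1 / p) :=
        Real.rpow_le_rpow (setIntegral_nonneg hs fun x hx =>
          mul_nonneg (hw_nonneg x hx) (Real.rpow_nonneg (h_nonneg x hx) p)) hbound (by positivity)
    _ = M * (∫ x in s, w x ∂μ) ^ (1 / p) := by
        rw [Real.mul_rpow (Real.rpow_nonneg hM p) hI, ← Real.rpow_mul hM,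
          mul_one_div_cancel hp.ne', Real.rpow_one]

theorem setIntegral_Iic_history_eq_Icc {E : Type*} [NormedAddCommGroup E] {w : ℝ → ℝ}
    {φ ψ : ℝ → E} {p : ℝ} (hp : p ≠ 0) (hagree : ∀ θ ≤ (0:ℝ), φ θ = ψ θ) (t : ℝ) :
    ∫ θ in Iic (0:ℝ), w θ * ‖φ (t + θ) - ψ (t + θ)‖ ^ p =
      ∫ θ in Icc (-t) (0:ℝ), w θ * ‖φ (t + θ) - ψ (t + θ)‖ ^ p := by
  refine setIntegral_eq_of_subset_of_forall_sdiff_eq_zero measurableSet_Iic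
    (fun θ hθ => hθ.2) fun θ ⟨hθ0, hθt⟩ => ?_
  have hθ : t + θ ≤ 0 := by
    by_contra! h
    exact hθt ⟨by linarith, hθ0⟩
  simp [hagree _ hθ, Real.zero_rpow hp]

theorem setIntegral_Icc_neg_mono {g : ℝ → ℝ} (hg_nonneg : ∀ θ ≤ (0:ℝ), 0 ≤ g θ) {s T : ℝ}
    (hg : IntegrableOn g (Icc (-T) 0)) (hsT : s ≤ T) :
    ∫ u in Icc (-s) (0:ℝ), g u ≤ ∫ u in Icc (-T) (0:ℝ), g u :=
  setIntegral_mono_set hg ((ae_restrict_iff' measurableSet_Icc).2 <|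
    ae_of_all _ fun θ hθ => hg_nonneg θ hθ.2)
    (ae_of_all _ <| Icc_subset_Icc (neg_le_neg hsT) le_rfl)

theorem history_sub_le_mul_biSup {E : Type*} [NormedAddCommGroup E] {p : ℝ} (hp : 0 < p)
    {g : ℝ → ℝ} (hg_nonneg : ∀ θ ≤ (0:ℝ), 0 ≤ g θ) {φ ψ : ℝ → E}
    (hagree : ∀ θ ≤ (0:ℝ), φ θ = ψ θ) {t : ℝ} (ht : 0 ≤ t) (hg : IntegrableOn g (Icc (-t) 0))
    (hbdd : BddAbove ((fun s => ‖φ s - ψ s‖) '' Icc 0 t)) :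
    ‖φ t - ψ t‖ + (∫ θ in Iic (0:ℝ), g θ * ‖φ (t + θ) - ψ (t + θ)‖ ^ p) ^ (1 / p) ≤
      (1 + (∫ u in Icc (-t) (0:ℝ), g u) ^ (1 / p)) * ⨆ s ∈ Icc (0:ℝ) t, ‖φ s - ψ s‖ := by
  set M := ⨆ s ∈ Icc (0:ℝ) t, ‖φ s - ψ s‖
  have hM : ‖φ t - ψ t‖ ≤ M := le_cbiSup hbdd ⟨ht, le_rfl⟩
  have hhistory : (∫ θ in Iic (0:ℝ), g θ * ‖φ (t + θ) - ψ (t + θ)‖ ^ p) ^ (1 / p) ≤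
      M * (∫ u in Icc (-t) (0:ℝ), g u) ^ (1 / p) := by
    rw [setIntegral_Iic_history_eq_Icc hp.ne' hagree]
    exact rpow_setIntegral_mul_rpow_le measurableSet_Icc hp ((norm_nonneg _).trans hM) hg
      (fun θ hθ => hg_nonneg θ hθ.2) (fun _ _ => norm_nonneg _)
      fun θ hθ => le_cbiSup hbdd ⟨by linarith [hθ.1], by linarith [hθ.2]⟩
  linarith

theorem history_difference_estimate_general
    {E : Type*} [NormedAddCommGroup E]
    (p : ℝ) (hp : 1 ≤ p)
    (g : ℝ → ℝ)
    (hg_pos : ∀ θ ≤ (0:ℝ), 0 < g θ)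
    (hg_int : ∀ r : ℝ, 0 ≤ r → IntegrableOn g (Set.Icc (-r) 0))
    (T : ℝ)
    (φ ψ : ℝ → E)
    (hφ_cont : ContinuousOn φ (Set.Icc 0 T)) (hψ_cont : ContinuousOn ψ (Set.Icc 0 T))
    (hagree : ∀ θ ≤ (0:ℝ), φ θ = ψ θ)
    (t : ℝ) (ht : t ∈ Set.Icc 0 T) :
    ‖φ t - ψ t‖ + (∫ θ in Set.Iic (0:ℝ), g θ * ‖(φ (t + θ) - ψ (t + θ))‖ ^ p) ^ (1/p) ≤
      (1 + (∫ u in Set.Icc (-t) (0:ℝ), g u) ^ (1/p)) *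
        (⨆ s ∈ Set.Icc (0:ℝ) t, ‖φ s - ψ s‖) ∧
    ‖φ t - ψ t‖ + (∫ θ in Set.Iic (0:ℝ), g θ * ‖(φ (t + θ) - ψ (t + θ))‖ ^ p) ^ (1/p) ≤
      (⨆ s ∈ Set.Icc (0:ℝ) T, (1 + (∫ u in Set.Icc (-s) (0:ℝ), g u) ^ (1/p))) *
        (⨆ s ∈ Set.Icc (0:ℝ) T, ‖φ s - ψ s‖) := by
  obtain ⟨ht0, htT⟩ := ht
  have hp0 : 0 < p := zero_lt_one.trans_le hp
  have hg_nonneg : ∀ θ ≤ (0:ℝ), 0 ≤ g θ := fun θ hθ => (hg_pos θ hθ).le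
  have hbddT : BddAbove ((fun s => ‖φ s - ψ s‖) '' Icc 0 T) :=
    isCompact_Icc.bddAbove_image (hφ_cont.sub hψ_cont).norm
  have hbddt := hbddT.mono (image_mono (Icc_subset_Icc_right htT))
  have hlocal := history_sub_le_mul_biSup hp0 hg_nonneg hagree ht0 (hg_int t ht0) hbddt
  have hI_nonneg : ∀ s, 0 ≤ ∫ u in Icc (-s) (0:ℝ), g u := fun _ =>
    setIntegral_nonneg measurableSet_Icc fun θ hθ => hg_nonneg θ hθ.2
  have hKbdd : BddAbove ((fun s => 1 + (∫ u in Icc (-s) (0:ℝ), g u) ^ (1 / p)) '' Icc 0 T) := by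
    refine ⟨1 + (∫ u in Icc (-T) (0:ℝ), g u) ^ (1 / p), ?_⟩
    rintro _ ⟨s, hs, rfl⟩
    gcongr 1 + ?_
    exact Real.rpow_le_rpow (hI_nonneg s)
      (setIntegral_Icc_neg_mono hg_nonneg (hg_int T (ht0.trans htT)) hs.2) (by positivity)
  have hKt := le_cbiSup hKbdd ⟨ht0, htT⟩
  have hMt := le_cbiSup hbddt ⟨ht0, le_rfl⟩
  have hMT := le_cbiSup hbddT ⟨ht0, htT⟩
  refine ⟨hlocal, hlocal.trans (mul_le_mul hKt ?_ ((norm_nonneg _).trans hMt) (le_trans ?_ hKt))⟩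
  · have hMT0 := (norm_nonneg _).trans hMT
    exact Real.iSup_le (fun s => Real.iSup_le (fun hs =>
      le_cbiSup hbddT (Icc_subset_Icc_right htT hs)) hMT0) hMT0
  · exact add_nonneg zero_le_one (Real.rpow_nonneg (hI_nonneg t) _)

/-- if `φ, ψ : (-∞,T] → E` are strongly measurable, continuous on `[0,T]`,
agree on `(-∞,0]`, and have initial histories in `ℬ = L^p_g(-∞,0;E) × E`, then for every
`t ∈ [0,T]`,
`‖((φ-ψ)_t, (φ-ψ)(t))‖_ℬ ≤ K(t)·sup_{s∈[0,t]}‖φ(s)-ψ(s)‖` with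
`K(t) = 1 + (∫_{-t}^0 g)^{1/p}`, and in particular
`‖((φ-ψ)_t, (φ-ψ)(t))‖_ℬ ≤ (sup_{s∈[0,T]} K(s))·sup_{s∈[0,T]}‖φ(s)-ψ(s)‖`. -/
theorem history_difference_estimate
    {E : Type*} [NormedAddCommGroup E] [NormedSpace ℝ E] [CompleteSpace E]
    (p : ℝ) (hp : 1 ≤ p)
    (g G : ℝ → ℝ)
    (hg_pos : ∀ θ ≤ (0:ℝ), 0 < g θ)
    (hg_int : ∀ r : ℝ, 0 ≤ r → IntegrableOn g (Set.Icc (-r) 0))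
    (hG_nonneg : ∀ s ≤ (0:ℝ), 0 ≤ G s)
    (hG_locbdd : ∀ r : ℝ, 0 ≤ r → ∃ C : ℝ, ∀ s ∈ Set.Icc (-r) 0, G s ≤ C)
    (hGg : ∀ s ≤ (0:ℝ),
      ∀ᵐ θ ∂(volume.restrict (Set.Iic (0:ℝ))), g (s + θ) ≤ G s * g θ)
    (T : ℝ) (hT : 0 < T)
    (φ ψ : ℝ → E) (hφ_meas : StronglyMeasurable φ) (hψ_meas : StronglyMeasurable ψ)
    (hφ_cont : ContinuousOn φ (Set.Icc 0 T)) (hψ_cont : ContinuousOn ψ (Set.Icc 0 T))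
    (hagree : ∀ θ ≤ (0:ℝ), φ θ = ψ θ)
    (hφ_init : IntegrableOn (fun θ => g θ * ‖φ θ‖ ^ p) (Set.Iic (0:ℝ)))
    (hψ_init : IntegrableOn (fun θ => g θ * ‖ψ θ‖ ^ p) (Set.Iic (0:ℝ)))
    (t : ℝ) (ht : t ∈ Set.Icc 0 T) :
    ‖φ t - ψ t‖ + (∫ θ in Set.Iic (0:ℝ), g θ * ‖(φ (t + θ) - ψ (t + θ))‖ ^ p) ^ (1/p) ≤
      (1 + (∫ u in Set.Icc (-t) (0:ℝ), g u) ^ (1/p)) *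
        (⨆ s ∈ Set.Icc (0:ℝ) t, ‖φ s - ψ s‖) ∧
    ‖φ t - ψ t‖ + (∫ θ in Set.Iic (0:ℝ), g θ * ‖(φ (t + θ) - ψ (t + θ))‖ ^ p) ^ (1/p) ≤
      (⨆ s ∈ Set.Icc (0:ℝ) T, (1 + (∫ u in Set.Icc (-s) (0:ℝ), g u) ^ (1/p))) *
        (⨆ s ∈ Set.Icc (0:ℝ) T, ‖φ s - ψ s‖) :=
  history_difference_estimate_general p hp g hg_pos hg_int T φ ψ hφ_cont hψ_cont hagree t ht
end

section
/- Let T > 0, α ∈ (0,1/2), p ∈ [1,∞). Let Φ : (-∞,0] → E and φ : (0,T] → E be strongly measurable, and define φ̃ : (-∞,T] → E by φ̃ = Φ on (-∞,0] and φ̃ = φ on (0,T], and Φ̂ : (-∞,T] → E by Φ̂ = Φ on (-∞,0] and Φ̂ = 0 on (0,T]. Then for every t ∈ [0,T], ∫_{-∞}^0 g(r)·(∫_0^t (t-s)^{-2α}‖φ̃(s+r)‖^2 ds)^{p/2} dr ≤ 2^{p-1}·[ ∫_{-∞}^0 g(r)·(∫_0^t (t-s)^{-2α}‖Φ̂(s+r)‖^2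 ds)^{p/2} dr + (∫_{-t}^0 g(r) dr)·sup_{t'∈[0,T]} (∫_0^{t'} (t'-u)^{-2α}‖φ(u)‖^2 du)^{p/2} ]. -/
/-!
Split the integrand of the inner integral at `s + r = 0`: the part with `s + r ≤ 0` is the one
of `Φ̂`, and after the substitution `u = s + r` the part with `s + r > 0` becomes the kernel
integral of `φ` up to time `t + r`, which vanishes for `r < -t` and is bounded by the supremum
for `r ∈ [-t, 0]`. The factor `2^{p-1}` comes from `(a + b)^{p/2} ≤ 2^{p-1} (a^{p/2} + b^{p/2})`.
-/

open MeasureTheory Set ENNReal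

theorem ENNReal.add_rpow_le_two_rpow_mul_add_rpow (a b : ℝ≥0∞) {q k : ℝ} (hq : 0 ≤ q)
    (hqk : q - 1 ≤ k) (hk : 0 ≤ k) : (a + b) ^ q ≤ 2 ^ k * (a ^ q + b ^ q) := by
  rcases le_total 1 q with hq1 | hq1
  · calc (a + b) ^ q ≤ 2 ^ (q - 1) * (a ^ q + b ^ q) := rpow_add_le_mul_rpow_add_rpow a b hq1
      _ ≤ 2 ^ k * (a ^ q + b ^ q) := by gcongr; exact one_le_two
  · calc (a + b) ^ q ≤ 1 * (a ^ q + b ^ q) := by rw [one_mul]; exact rpow_add_le_add_rpow a b hq hq1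
      _ ≤ 2 ^ k * (a ^ q + b ^ q) := by
        gcongr
        simpa using rpow_le_rpow_of_exponent_le one_le_two hk

theorem MeasureTheory.setLIntegral_Ioc_comp_add_right (f : ℝ → ℝ≥0∞) (a b c : ℝ) :
    ∫⁻ s in Ioc a b, f (s + c) = ∫⁻ u in Ioc (a + c) (b + c), f u := by
  rw [(measurePreserving_add_right volume c).setLIntegral_comp_emb
    (measurableEmbedding_addRight c), image_add_const_Ioc]

section KernelEnergy

variable {E : Type*} [NormedAddCommGroup E]

noncomputable def kernelEnergy (α : ℝ) (f : ℝ → E) (t : ℝ) : ℝ≥0∞ :=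
  ∫⁻ u in Ioc 0 t, ENNReal.ofReal ((t - u) ^ (-(2 * α))) * (‖f u‖₊ : ℝ≥0∞) ^ 2

theorem kernelEnergy_of_nonpos (α : ℝ) (f : ℝ → E) {t : ℝ} (ht : t ≤ 0) :
    kernelEnergy α f t = 0 := by
  simp [kernelEnergy, Ioc_eq_empty_of_le ht]

theorem kernelEnergy_piecewise_history (α : ℝ) (Φ φ : ℝ → E) {r : ℝ} (hr : r ≤ 0) (t : ℝ) :
    kernelEnergy α (fun s => if s + r ≤ 0 then Φ (s + r) else φ (s + r)) t =
      kernelEnergy α (fun s => if s + r ≤ 0 then Φ (s + r) else 0) t +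
        kernelEnergy α φ (t + r) := by
  have hB : MeasurableSet (Iic (-r)) := measurableSet_Iic
  have hpast : ∫⁻ s in Ioc 0 t ∩ Iic (-r), ENNReal.ofReal ((t - s) ^ (-(2 * α))) *
      (‖if s + r ≤ 0 then Φ (s + r) else φ (s + r)‖₊ : ℝ≥0∞) ^ 2 =
      kernelEnergy α (fun s => if s + r ≤ 0 then Φ (s + r) else 0) t := by
    rw [kernelEnergy, ← lintegral_inter_add_sdiff _ (Ioc 0 t) hB]
    have hzero : ∫⁻ s in Ioc 0 t \ Iic (-r), ENNReal.ofReal ((t - s) ^ (-(2 * α))) *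
        (‖if s + r ≤ 0 then Φ (s + r) else 0‖₊ : ℝ≥0∞) ^ 2 = 0 := by
      refine (setLIntegral_congr_fun (measurableSet_Ioc.diff hB) fun s hs => ?_).trans
        lintegral_zero
      have hs' : ¬ s + r ≤ 0 := fun h => hs.2 (by simp only [mem_Iic]; linarith)
      simp [hs']
    rw [hzero, add_zero]
    refine setLIntegral_congr_fun (measurableSet_Ioc.inter hB) fun s hs => ?_
    have hs' : s + r ≤ 0 := by linarith [mem_Iic.1 hs.2]
    simp only [if_pos hs']
  have hfuture : ∫⁻ s in Ioc 0 t \ Iic (-r), ENNReal.ofReal ((t - s) ^ (-(2 * α))) *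
      (‖if s + r ≤ 0 then Φ (s + r) else φ (s + r)‖₊ : ℝ≥0∞) ^ 2 = kernelEnergy α φ (t + r) := by
    have hshift := setLIntegral_Ioc_comp_add_right
      (fun u => ENNReal.ofReal ((t + r - u) ^ (-(2 * α))) * (‖φ u‖₊ : ℝ≥0∞) ^ 2) (-r) t r
    rw [neg_add_cancel] at hshift
    rw [Ioc_sdiff_Iic, max_eq_right (by linarith), kernelEnergy, ← hshift]
    refine setLIntegral_congr_fun measurableSet_Ioc fun s hs => ?_
    have hs' : ¬ s + r ≤ 0 := by linarith [hs.1]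
    simp only [if_neg hs', add_sub_add_right_eq_sub]
  rw [kernelEnergy, ← lintegral_inter_add_sdiff _ _ hB, hpast, hfuture]

theorem kernelEnergy_add_rpow_le_indicator_iSup (α : ℝ) (φ : ℝ → E) {q : ℝ} (hq : 0 < q)
    {t T r : ℝ} (htT : t ≤ T) (hr : r ≤ 0) :
    kernelEnergy α φ (t + r) ^ q ≤
      (Icc (-t) 0).indicator (fun _ => ⨆ t' ∈ Icc 0 T, kernelEnergy α φ t' ^ q) r := by
  by_cases hrt : -t ≤ r
  · have hmem : t + r ∈ Icc 0 T := ⟨by linarith, by linarith⟩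
    rw [indicator_of_mem (show r ∈ Icc (-t) 0 from ⟨hrt, hr⟩)]
    exact le_biSup (fun t' => kernelEnergy α φ t' ^ q) hmem
  · rw [kernelEnergy_of_nonpos α φ (by linarith), zero_rpow_of_pos hq]
    exact zero_le

theorem kernelEnergy_piecewise_history_rpow_le (α : ℝ) (Φ φ : ℝ → E) {p : ℝ} (hp : 1 ≤ p)
    {t T r : ℝ} (htT : t ≤ T) (hr : r ≤ 0) :
    kernelEnergy α (fun s => if s + r ≤ 0 then Φ (s + r) else φ (s + r)) t ^ (p / 2) ≤
      2 ^ (p - 1) * (kernelEnergy α (fun s => if s + r ≤ 0 then Φ (s + r) else 0) t ^ (p / 2) +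
        (Icc (-t) 0).indicator (fun _ => ⨆ t' ∈ Icc 0 T, kernelEnergy α φ t' ^ (p / 2)) r) := by
  rw [kernelEnergy_piecewise_history α Φ φ hr]
  calc _ ≤ 2 ^ (p - 1) * (kernelEnergy α (fun s => if s + r ≤ 0 then Φ (s + r) else 0) t ^ (p / 2)
          + kernelEnergy α φ (t + r) ^ (p / 2)) :=
        add_rpow_le_two_rpow_mul_add_rpow _ _ (by linarith) (by linarith) (by linarith)
    _ ≤ _ := by
        gcongr
        exact kernelEnergy_add_rpow_le_indicator_iSup α φ (by linarith) htT hr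

end KernelEnergy

theorem tilde_history_kernel_estimate_general
    {E : Type*} [NormedAddCommGroup E]
    (p : ℝ) (hp : 1 ≤ p)
    (g : ℝ → ℝ)
    (hg_int : ∀ r : ℝ, 0 ≤ r → IntegrableOn g (Set.Icc (-r) 0))
    (T α : ℝ)
    (Φ φ : ℝ → E)
    (t : ℝ) (ht : t ∈ Set.Icc 0 T) :
    (∫⁻ r in Set.Iic (0:ℝ), ENNReal.ofReal (g r) *
        (∫⁻ s in Set.Ioc (0:ℝ) t,
          ENNReal.ofReal ((t - s) ^ (-(2*α))) *
            (‖(if s + r ≤ 0 then Φ (s + r) else φ (s + r))‖₊ : ℝ≥0∞) ^ 2) ^ (p/2)) ≤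
      (2 : ℝ≥0∞) ^ (p - 1) *
        ((∫⁻ r in Set.Iic (0:ℝ), ENNReal.ofReal (g r) *
            (∫⁻ s in Set.Ioc (0:ℝ) t,
              ENNReal.ofReal ((t - s) ^ (-(2*α))) *
                (‖(if s + r ≤ 0 then Φ (s + r) else 0)‖₊ : ℝ≥0∞) ^ 2) ^ (p/2)) +
          (∫⁻ r in Set.Icc (-t) (0:ℝ), ENNReal.ofReal (g r)) *
            ⨆ t' ∈ Set.Icc (0:ℝ) T,
              (∫⁻ u in Set.Ioc (0:ℝ) t',
                ENNReal.ofReal ((t' - u) ^ (-(2*α))) * (‖φ u‖₊ : ℝ≥0∞) ^ 2) ^ (p/2)) := by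
  obtain ⟨ht0, htT⟩ := ht
  set S := ⨆ t' ∈ Icc (0:ℝ) T, kernelEnergy α φ t' ^ (p / 2)
  have hg : AEMeasurable (fun r => ENNReal.ofReal (g r)) (volume.restrict (Icc (-t) 0)) :=
    (hg_int t ht0).aestronglyMeasurable.aemeasurable.ennreal_ofReal
  have hgS : AEMeasurable ((Icc (-t) 0).indicator fun r => ENNReal.ofReal (g r) * S)
      (volume.restrict (Iic 0)) := by
    rw [aemeasurable_indicator_iff measurableSet_Icc, Measure.restrict_restrict measurableSet_Icc,
      inter_eq_self_of_subset_left Icc_subset_Iic_self]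
    exact hg.mul_const S
  calc _ ≤ ∫⁻ r in Iic 0, 2 ^ (p - 1) * (ENNReal.ofReal (g r) *
          kernelEnergy α (fun s => if s + r ≤ 0 then Φ (s + r) else 0) t ^ (p / 2) +
          (Icc (-t) 0).indicator (fun r => ENNReal.ofReal (g r) * S) r) := by
        refine setLIntegral_mono' measurableSet_Iic fun r hr => ?_
        rw [indicator_mul_right, ← mul_add, mul_left_comm]
        exact mul_le_mul_right (kernelEnergy_piecewise_history_rpow_le α Φ φ hp htT hr) _
    _ = _ := by
        rw [lintegral_const_mul' _ _ (rpow_ne_top_of_nonneg (by linarith) ofNat_ne_top),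
          lintegral_add_right' _ hgS, lintegral_indicator measurableSet_Icc,
          Measure.restrict_restrict measurableSet_Icc,
          inter_eq_self_of_subset_left Icc_subset_Iic_self, lintegral_mul_const'' S hg]
        rfl

/-- let `φ̃` be `Φ` on `(-∞,0]` and `φ` on `(0,T]`, and `Φ̂` be `Φ` on
`(-∞,0]` and `0` on `(0,T]`. Then for `t ∈ [0,T]` (in the extended reals):
`∫_{-∞}^0 g(r)·(∫_0^t (t-s)^{-2α}‖φ̃(s+r)‖² ds)^{p/2} dr
  ≤ 2^{p-1}·[ ∫_{-∞}^0 g(r)·(∫_0^t (t-s)^{-2α}‖Φ̂(s+r)‖² ds)^{p/2} dr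
    + (∫_{-t}^0 g(r) dr)·sup_{t'∈[0,T]} (∫_0^{t'} (t'-u)^{-2α}‖φ(u)‖² du)^{p/2} ]`. -/
theorem tilde_history_kernel_estimate
    {E : Type*} [NormedAddCommGroup E] [NormedSpace ℝ E] [CompleteSpace E]
    (p : ℝ) (hp : 1 ≤ p)
    (g G : ℝ → ℝ)
    (hg_pos : ∀ θ ≤ (0:ℝ), 0 < g θ)
    (hg_int : ∀ r : ℝ, 0 ≤ r → IntegrableOn g (Set.Icc (-r) 0))
    (hG_nonneg : ∀ s ≤ (0:ℝ), 0 ≤ G s)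
    (hG_locbdd : ∀ r : ℝ, 0 ≤ r → ∃ C : ℝ, ∀ s ∈ Set.Icc (-r) 0, G s ≤ C)
    (hGg : ∀ s ≤ (0:ℝ),
      ∀ᵐ θ ∂(volume.restrict (Set.Iic (0:ℝ))), g (s + θ) ≤ G s * g θ)
    (T α : ℝ) (hT : 0 < T) (hα : α ∈ Set.Ioo (0:ℝ) (1/2))
    (Φ φ : ℝ → E) (hΦ_meas : StronglyMeasurable Φ) (hφ_meas : StronglyMeasurable φ)
    (t : ℝ) (ht : t ∈ Set.Icc 0 T) :
    (∫⁻ r in Set.Iic (0:ℝ), ENNReal.ofReal (g r) *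
        (∫⁻ s in Set.Ioc (0:ℝ) t,
          ENNReal.ofReal ((t - s) ^ (-(2*α))) *
            (‖(if s + r ≤ 0 then Φ (s + r) else φ (s + r))‖₊ : ℝ≥0∞) ^ 2) ^ (p/2)) ≤
      (2 : ℝ≥0∞) ^ (p - 1) *
        ((∫⁻ r in Set.Iic (0:ℝ), ENNReal.ofReal (g r) *
            (∫⁻ s in Set.Ioc (0:ℝ) t,
              ENNReal.ofReal ((t - s) ^ (-(2*α))) *
                (‖(if s + r ≤ 0 then Φ (s + r) else 0)‖₊ : ℝ≥0∞) ^ 2) ^ (p/2)) +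
          (∫⁻ r in Set.Icc (-t) (0:ℝ), ENNReal.ofReal (g r)) *
            ⨆ t' ∈ Set.Icc (0:ℝ) T,
              (∫⁻ u in Set.Ioc (0:ℝ) t',
                ENNReal.ofReal ((t' - u) ^ (-(2*α))) * (‖φ u‖₊ : ℝ≥0∞) ^ 2) ^ (p/2)) :=
  tilde_history_kernel_estimate_general p hp g hg_int T α Φ φ t ht
end
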